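/- Let ω ∈ ℝ, μ > 0, β > 0, α > γ > 0. Suppose u₁, u₂, u₃ are continuous on the closed unit ball, twice continuously differentiable in B₁, positive in B₁, satisfy in B₁ the system L_ω u₁ = μu₁(1−u₁) − βαu₁u₂ − βγu₁u₃, L_ω u₂ = μu₂(1−u₂) − βγu₁u₂ − βαu₂u₃, L_ω u₃ = μu₃(1−u₃) − βαu₁u₃ − βγu₂u₃, and satisfy 0 ≤ uᵢ < 1 on ∂B₁. Then 0 < uᵢ(x) < 1 for every x ∈ B₁ and every i = 1, 2, 3. -/

import Mathlib

/-! At an interior maximum of a `C²` function the gradient vanishes and the pure second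
derivatives are nonpositive, so `L_ω u ≥ 0` there: the rotation term is of first order.
Where `uᵢ ≥ 1` the right-hand side of the `i`-th equation is negative, because the logistic
term is `≤ 0` and the competition terms are `> 0` by positivity of the other components.
Hence a maximum of `uᵢ` over the closed disk with value `≥ 1` can only lie on the circle,
where `uᵢ < 1`. -/

noncomputable section

/-- First partial derivative `∂₁u`. -/
def pd1 (u : ℝ × ℝ → ℝ) (x : ℝ × ℝ) : ℝ := fderiv ℝ u x (1, 0)

/-- Second partial derivative `∂₂u`. -/
def pd2 (u : ℝ × ℝ → ℝ) (x : ℝ × ℝ) : ℝ := fderiv ℝ u x (0, 1)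

/-- The Laplacian `Δu = ∂₁₁u + ∂₂₂u`. -/
def lap (u : ℝ × ℝ → ℝ) (x : ℝ × ℝ) : ℝ := pd1 (pd1 u) x + pd2 (pd2 u) x

/-- The rotating-frame operator `L_ω u = −Δu + ω x⊥·∇u`. -/
def Lop (ω : ℝ) (u : ℝ × ℝ → ℝ) (x : ℝ × ℝ) : ℝ :=
  -lap u x + ω * (-x.2 * pd1 u x + x.1 * pd2 u x)

/-- The open unit disk `B₁ ⊂ ℝ²`. -/
def unitBall : Set (ℝ × ℝ) := {x | x.1 ^ 2 + x.2 ^ 2 < 1}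

/-- The closed unit disk in `ℝ²`. -/
def unitClosedBall : Set (ℝ × ℝ) := {x | x.1 ^ 2 + x.2 ^ 2 ≤ 1}

/-- The unit circle `∂B₁ ⊂ ℝ²`. -/
def unitSphere : Set (ℝ × ℝ) := {x | x.1 ^ 2 + x.2 ^ 2 = 1}

open Filter Topology

/-- If `deriv (deriv f) x₀ > 0`, the second derivative test makes `x₀` a local minimum as well,
so `f` is locally constant. -/
theorem deriv_deriv_nonpos_of_isLocalMax {f : ℝ → ℝ} {x₀ : ℝ} (hmax : IsLocalMax f x₀)
    (hc : ContinuousAt f x₀) : deriv (deriv f) x₀ ≤ 0 := by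
  by_contra! hpos
  have hmin := isLocalMin_of_deriv_deriv_pos hpos hmax.deriv_eq_zero hc
  have hconst : f =ᶠ[𝓝 x₀] fun _ => f x₀ :=
    (hmax.and hmin).mono fun x hx => le_antisymm hx.1 hx.2
  have hderiv : deriv f =ᶠ[𝓝 x₀] fun _ => 0 :=
    hconst.eventually_nhds.mono fun x (hx : f =ᶠ[𝓝 x] fun _ => f x₀) => by simpa using hx.deriv_eq
  exact hpos.ne' (by simpa using hderiv.deriv_eq)

theorem fderiv_fderiv_apply_nonpos_of_isLocalMax {E : Type*} [NormedAddCommGroup E]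
    [NormedSpace ℝ E] {u : E → ℝ} {z : E} (hmax : IsLocalMax u z)
    (hdiff : ∀ᶠ x in 𝓝 z, DifferentiableAt ℝ u x) (hdiff₂ : DifferentiableAt ℝ (fderiv ℝ u) z)
    (v : E) : fderiv ℝ (fun x => fderiv ℝ u x v) z v ≤ 0 := by
  set line : ℝ → E := fun t => z + t • v with line_def
  have hline : ∀ t, HasDerivAt line v t := fun t => by
    simpa [line_def] using ((hasDerivAt_id t).smul_const v).const_add z
  have hline₀ : line 0 = z := by simp [line_def]
  rw [← hline₀] at hmax hdiff hdiff₂ ⊢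
  have hderiv : deriv (u ∘ line) =ᶠ[𝓝 0] fun t => fderiv ℝ u (line t) v := by
    filter_upwards [(hline 0).continuousAt.eventually hdiff] with t ht
    exact (ht.hasFDerivAt.comp_hasDerivAt t (hline t)).deriv
  have hderiv₂ : deriv (deriv (u ∘ line)) 0 = fderiv ℝ (fun x => fderiv ℝ u x v) (line 0) v := by
    rw [hderiv.deriv_eq]
    exact ((hdiff₂.clm_apply (differentiableAt_const v)).hasFDerivAt.comp_hasDerivAt 0
      (hline 0)).deriv
  rw [← hderiv₂]
  exact deriv_deriv_nonpos_of_isLocalMax (hmax.comp_continuous (hline 0).continuousAt)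
    (hdiff.self_of_nhds.continuousAt.comp (hline 0).continuousAt)

theorem Lop_nonneg_of_isLocalMax (ω : ℝ) {u : ℝ × ℝ → ℝ} {s : Set (ℝ × ℝ)} {z : ℝ × ℝ}
    (hs : IsOpen s) (hreg : ContDiffOn ℝ 2 u s) (hz : z ∈ s) (hmax : IsLocalMax u z) :
    0 ≤ Lop ω u z := by
  have hdiff : ∀ᶠ x in 𝓝 z, DifferentiableAt ℝ u x :=
    eventually_of_mem (hs.mem_nhds hz) fun x hx =>
      (hreg.contDiffAt (hs.mem_nhds hx)).differentiableAt (by norm_num)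
  have hdiff₂ : DifferentiableAt ℝ (fderiv ℝ u) z :=
    ((hreg.fderiv_of_isOpen hs (m := 1) (by norm_num)).contDiffAt (hs.mem_nhds hz)).differentiableAt
      (by norm_num)
  have h₁₁ : pd1 (pd1 u) z ≤ 0 := fderiv_fderiv_apply_nonpos_of_isLocalMax hmax hdiff hdiff₂ _
  have h₂₂ : pd2 (pd2 u) z ≤ 0 := fderiv_fderiv_apply_nonpos_of_isLocalMax hmax hdiff hdiff₂ _
  have hgrad : fderiv ℝ u z = 0 := hmax.fderiv_eq_zero
  simp only [Lop, lap, pd1, pd2, hgrad, zero_apply] at h₁₁ h₂₂ ⊢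
  linarith

theorem isOpen_unitBall : IsOpen unitBall :=
  isOpen_lt (by fun_prop) continuous_const

theorem isCompact_unitClosedBall : IsCompact unitClosedBall := by
  refine (isCompact_Icc (a := ((-1 : ℝ), (-1 : ℝ))) (b := (1, 1))).of_isClosed_subset
    (isClosed_le (by fun_prop) continuous_const) fun x (hx : x.1 ^ 2 + x.2 ^ 2 ≤ 1) => ?_
  have h₁ : |x.1| ≤ 1 := sq_le_one_iff_abs_le_one _ |>.mp (by nlinarith [sq_nonneg x.2])
  have h₂ : |x.2| ≤ 1 := sq_le_one_iff_abs_le_one _ |>.mp (by nlinarith [sq_nonneg x.1])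
  rw [abs_le] at h₁ h₂
  exact ⟨⟨h₁.1, h₂.1⟩, ⟨h₁.2, h₂.2⟩⟩

theorem unitBall_union_unitSphere : unitBall ∪ unitSphere = unitClosedBall := by
  ext x
  simp only [unitBall, unitSphere, unitClosedBall, Set.mem_union, Set.mem_ofPred_eq,
    le_iff_lt_or_eq]

theorem lt_of_Lop_neg_of_lt_on_unitSphere {ω c : ℝ} {u : ℝ × ℝ → ℝ}
    (hcont : ContinuousOn u unitClosedBall) (hreg : ContDiffOn ℝ 2 u unitBall)
    (hneg : ∀ x ∈ unitBall, c ≤ u x → Lop ω u x < 0) (hbc : ∀ x ∈ unitSphere, u x < c) :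
    ∀ x ∈ unitBall, u x < c := by
  by_contra! ⟨x, hx, hcx⟩
  have hball_sub : unitBall ⊆ unitClosedBall := unitBall_union_unitSphere ▸ Set.subset_union_left
  obtain ⟨z, hz, hzmax⟩ := isCompact_unitClosedBall.exists_isMaxOn ⟨x, hball_sub hx⟩ hcont
  have hcz : c ≤ u z := hcx.trans (hzmax (hball_sub hx))
  have hz_ball : z ∈ unitBall := by
    rw [← unitBall_union_unitSphere] at hz
    exact hz.resolve_right fun hz_sphere => (hbc z hz_sphere).not_ge hcz
  have hlocmax : IsLocalMax u z :=
    hzmax.isLocalMax (mem_of_superset (isOpen_unitBall.mem_nhds hz_ball) hball_sub)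
  exact (hneg z hz_ball hcz).not_ge
    (Lop_nonneg_of_isLocalMax ω isOpen_unitBall hreg hz_ball hlocmax)

theorem logistic_sub_competition_neg {μ a b u v w : ℝ} (hμ : 0 ≤ μ) (ha : 0 < a) (hb : 0 ≤ b)
    (hv : 0 < v) (hw : 0 ≤ w) (hu : 1 ≤ u) : μ * u * (1 - u) - a * u * v - b * u * w < 0 := by
  have hu₀ : 0 < u := one_pos.trans_le hu
  have hlogistic : μ * u * (1 - u) ≤ 0 :=
    mul_nonpos_of_nonneg_of_nonpos (mul_nonneg hμ hu₀.le) (sub_nonpos.mpr hu)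
  have hav : 0 < a * u * v := by positivity
  have hbw : 0 ≤ b * u * w := by positivity
  linarith

/-- Any positive solution of the Dirichlet problem for the three-component competition
system with boundary data in `[0,1)` satisfies `0 < uᵢ < 1` in the open unit ball. -/
theorem dirichlet_solution_below_one
    (ω μ β α γ : ℝ) (hμ : 0 < μ) (hβ : 0 < β) (hγ : 0 < γ) (hαγ : γ < α)
    (u₁ u₂ u₃ : ℝ × ℝ → ℝ)
    (hcont₁ : ContinuousOn u₁ unitClosedBall)
    (hcont₂ : ContinuousOn u₂ unitClosedBall)
    (hcont₃ : ContinuousOn u₃ unitClosedBall)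
    (hreg₁ : ContDiffOn ℝ 2 u₁ unitBall)
    (hreg₂ : ContDiffOn ℝ 2 u₂ unitBall)
    (hreg₃ : ContDiffOn ℝ 2 u₃ unitBall)
    (hpos₁ : ∀ x ∈ unitBall, 0 < u₁ x)
    (hpos₂ : ∀ x ∈ unitBall, 0 < u₂ x)
    (hpos₃ : ∀ x ∈ unitBall, 0 < u₃ x)
    (hpde₁ : ∀ x ∈ unitBall,
      Lop ω u₁ x = μ * u₁ x * (1 - u₁ x) - β * α * u₁ x * u₂ x - β * γ * u₁ x * u₃ x)
    (hpde₂ : ∀ x ∈ unitBall,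
      Lop ω u₂ x = μ * u₂ x * (1 - u₂ x) - β * γ * u₁ x * u₂ x - β * α * u₂ x * u₃ x)
    (hpde₃ : ∀ x ∈ unitBall,
      Lop ω u₃ x = μ * u₃ x * (1 - u₃ x) - β * α * u₁ x * u₃ x - β * γ * u₂ x * u₃ x)
    (hbc₁ : ∀ x ∈ unitSphere, 0 ≤ u₁ x ∧ u₁ x < 1)
    (hbc₂ : ∀ x ∈ unitSphere, 0 ≤ u₂ x ∧ u₂ x < 1)
    (hbc₃ : ∀ x ∈ unitSphere, 0 ≤ u₃ x ∧ u₃ x < 1) :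
    ∀ x ∈ unitBall, (0 < u₁ x ∧ u₁ x < 1) ∧ (0 < u₂ x ∧ u₂ x < 1) ∧
      (0 < u₃ x ∧ u₃ x < 1) := by
  have hβα : 0 < β * α := mul_pos hβ (hγ.trans hαγ)
  have hβγ : 0 < β * γ := mul_pos hβ hγ
  have h₁ := lt_of_Lop_neg_of_lt_on_unitSphere hcont₁ hreg₁ (fun x hx hu => by
    rw [hpde₁ x hx]
    exact logistic_sub_competition_neg hμ.le hβα hβγ.le (hpos₂ x hx) (hpos₃ x hx).le hu)
    fun x hx => (hbc₁ x hx).2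
  have h₂ := lt_of_Lop_neg_of_lt_on_unitSphere hcont₂ hreg₂ (fun x hx hu => by
    rw [hpde₂ x hx]
    linarith [logistic_sub_competition_neg hμ.le hβγ hβα.le (hpos₁ x hx) (hpos₃ x hx).le hu])
    fun x hx => (hbc₂ x hx).2
  have h₃ := lt_of_Lop_neg_of_lt_on_unitSphere hcont₃ hreg₃ (fun x hx hu => by
    rw [hpde₃ x hx]
    linarith [logistic_sub_competition_neg hμ.le hβα hβγ.le (hpos₁ x hx) (hpos₂ x hx).le hu])
    fun x hx => (hbc₃ x hx).2
  exact fun x hx => ⟨⟨hpos₁ x hx, h₁ x hx⟩, ⟨hpos₂ x hx, h₂ x hx⟩, ⟨hpos₃ x hx, h₃ x hx⟩⟩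

end
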